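/- Let u : [0,L] → ℝ be twice continuously differentiable with u(0)=u(L)=u'(0)=u'(L)=0. Then the sup-norm bound ‖u‖_∞ ≤ √2 · ‖u''‖^{1/4} · ‖u‖^{3/4} holds, where ‖·‖ is the L²(0,L) norm and ‖u‖_∞ = sup_{x∈[0,L]} |u(x)|. -/

import Mathlib

/-!
Integrating by parts against the zero boundary values gives `‖u'‖² = -∫ u u'' ≤ ‖u‖ ‖u''‖`, while
`u(x)² = 2 ∫₀ˣ u u' ≤ 2 ‖u‖ ‖u'‖`. Substituting the first bound into the second yields
`u(x)² ≤ 2 ‖u‖^{3/2} ‖u''‖^{1/2}`.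
-/

open MeasureTheory intervalIntegral Real

theorem intervalIntegral.abs_integral_mul_le_sqrt_mul_sqrt {f g : ℝ → ℝ} (hf : Continuous f)
    (hg : Continuous g) {a b : ℝ} (hab : a ≤ b) :
    |∫ x in a..b, f x * g x| ≤ √(∫ x in a..b, f x ^ 2) * √(∫ x in a..b, g x ^ 2) := by
  set A := ∫ x in a..b, f x ^ 2
  set B := ∫ x in a..b, f x * g x
  set C := ∫ x in a..b, g x ^ 2
  have hA : 0 ≤ A := integral_nonneg hab fun x _ ↦ sq_nonneg _
  -- `t ↦ ∫ (t g + f)²` is a nonnegative quadratic, so its discriminant is nonpositive.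
  have quadratic_nonneg (t : ℝ) : 0 ≤ C * (t * t) + 2 * B * t + A := by
    have expand : ∫ x in a..b, (t * g x + f x) ^ 2 = C * (t * t) + 2 * B * t + A := by
      have hsq (x : ℝ) : (t * g x + f x) ^ 2 = t * t * g x ^ 2 + 2 * t * (f x * g x) + f x ^ 2 := by
        ring
      simp only [hsq]
      rw [integral_add, integral_add, integral_const_mul, integral_const_mul]
      · ring
      all_goals apply Continuous.intervalIntegrable; fun_prop
    rw [← expand]
    exact integral_nonneg hab fun x _ ↦ sq_nonneg _
  have hB : B ^ 2 ≤ A * C := by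
    have := discrim_le_zero quadratic_nonneg
    rw [discrim] at this
    linarith
  calc |B| = √(B ^ 2) := (sqrt_sq_eq_abs B).symm
    _ ≤ √(A * C) := sqrt_le_sqrt hB
    _ = √A * √C := sqrt_mul hA C

theorem integral_deriv_sq_eq_neg_integral_mul_deriv_deriv {u : ℝ → ℝ} (hu : ContDiff ℝ 2 u)
    {a b : ℝ} (ha : u a = 0) (hb : u b = 0) :
    ∫ x in a..b, deriv u x ^ 2 = -∫ x in a..b, u x * deriv (deriv u) x := by
  have hu' : ContDiff ℝ 1 (deriv u) := hu.iterate_deriv' 1 1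
  have parts := integral_mul_deriv_eq_deriv_mul (a := a) (b := b)
    (fun x _ ↦ (hu.differentiable two_ne_zero x).hasDerivAt)
    (fun x _ ↦ (hu'.differentiable one_ne_zero x).hasDerivAt)
    ((hu.continuous_deriv one_le_two).intervalIntegrable a b)
    ((hu'.continuous_deriv le_rfl).intervalIntegrable a b)
  simp only [ha, hb, zero_mul, sub_zero, zero_sub] at parts
  simp only [parts, sq, neg_neg]

theorem sq_eq_integral_two_mul_mul_deriv {u : ℝ → ℝ} (hu : ContDiff ℝ 1 u) {a x : ℝ}
    (ha : u a = 0) : u x ^ 2 = ∫ y in a..x, 2 * u y * deriv u y := by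
  have hderiv (y : ℝ) : HasDerivAt (fun z ↦ u z ^ 2) (2 * u y * deriv u y) y := by
    simpa using (hu.differentiable one_ne_zero y).hasDerivAt.fun_pow 2
  rw [integral_eq_sub_of_hasDerivAt (fun y _ ↦ hderiv y)
    (by apply Continuous.intervalIntegrable; have := hu.continuous_deriv le_rfl; fun_prop)]
  simp [ha]

theorem integral_sq_le_integral_sq_of_mem_Icc {f : ℝ → ℝ} (hf : Continuous f) {a b x : ℝ} (hx : x ∈ Set.Icc a b) :
    ∫ y in a..x, f y ^ 2 ≤ ∫ y in a..b, f y ^ 2 :=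
  integral_mono_interval le_rfl hx.1 hx.2 (.of_forall fun _ ↦ sq_nonneg _)
    ((hf.pow 2).intervalIntegrable a b)

theorem sq_le_two_mul_sqrt_integral_sq_mul_sqrt_integral_deriv_sq {u : ℝ → ℝ}
    (hu : ContDiff ℝ 1 u) {a b x : ℝ} (ha : u a = 0) (hx : x ∈ Set.Icc a b) :
    u x ^ 2 ≤ 2 * (√(∫ y in a..b, u y ^ 2) * √(∫ y in a..b, deriv u y ^ 2)) := by
  have hc := hu.continuous
  have hc' := hu.continuous_deriv le_rfl
  calc u x ^ 2 = 2 * ∫ y in a..x, u y * deriv u y := by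
        simp only [sq_eq_integral_two_mul_mul_deriv hu ha, mul_assoc, intervalIntegral.integral_const_mul]
    _ ≤ 2 * (√(∫ y in a..x, u y ^ 2) * √(∫ y in a..x, deriv u y ^ 2)) := by
        gcongr
        exact (le_abs_self _).trans (abs_integral_mul_le_sqrt_mul_sqrt hc hc' hx.1)
    _ ≤ 2 * (√(∫ y in a..b, u y ^ 2) * √(∫ y in a..b, deriv u y ^ 2)) := by
        gcongr
        · exact integral_sq_le_integral_sq_of_mem_Icc hc hx
        · exact integral_sq_le_integral_sq_of_mem_Icc hc' hx

theorem integral_deriv_sq_le_sqrt_mul_sqrt {u : ℝ → ℝ} (hu : ContDiff ℝ 2 u) {a b : ℝ}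
    (hab : a ≤ b) (ha : u a = 0) (hb : u b = 0) :
    ∫ x in a..b, deriv u x ^ 2 ≤
      √(∫ x in a..b, u x ^ 2) * √(∫ x in a..b, deriv (deriv u) x ^ 2) := by
  rw [integral_deriv_sq_eq_neg_integral_mul_deriv_deriv hu ha hb]
  exact (neg_le_abs _).trans <| abs_integral_mul_le_sqrt_mul_sqrt hu.continuous
    ((hu.iterate_deriv' 0 2).continuous) hab

theorem abs_le_sqrt_two_mul_rpow_mul_rpow {y A B : ℝ} (hA : 0 ≤ A) (hB : 0 ≤ B)
    (hy : y ^ 2 ≤ 2 * (B * √(B * A))) :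
    |y| ≤ √2 * A ^ (1 / 4 : ℝ) * B ^ (3 / 4 : ℝ) := by
  refine abs_le_of_sq_le_sq (hy.trans_eq ?_) (by positivity)
  rw [mul_pow, mul_pow, sq_sqrt zero_le_two, ← rpow_natCast, ← rpow_natCast, ← rpow_mul hA,
    ← rpow_mul hB, sqrt_mul hB, sqrt_eq_rpow, sqrt_eq_rpow]
  rw [show (1 / 4 : ℝ) * (2 : ℕ) = 1 / 2 by norm_num, show (3 / 4 : ℝ) * (2 : ℕ) = 1 + 1 / 2 by norm_num,
    rpow_add' hB (by norm_num), rpow_one]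
  ring

theorem gagliardo_nirenberg_interval_general (L : ℝ) (u : ℝ → ℝ)
    (hu : ContDiff ℝ 2 u)
    (hu0 : u 0 = 0) (huL : u L = 0) :
    ∀ x ∈ Set.Icc (0:ℝ) L,
      |u x| ≤ Real.sqrt 2 *
        (Real.sqrt (∫ y in (0:ℝ)..L, (deriv (deriv u) y) ^ 2)) ^ ((1:ℝ)/4) *
        (Real.sqrt (∫ y in (0:ℝ)..L, (u y) ^ 2)) ^ ((3:ℝ)/4) := by
  intro x hx
  apply abs_le_sqrt_two_mul_rpow_mul_rpow (sqrt_nonneg _) (sqrt_nonneg _)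
  calc u x ^ 2 ≤ 2 * (√(∫ y in (0:ℝ)..L, u y ^ 2) * √(∫ y in (0:ℝ)..L, deriv u y ^ 2)) :=
        sq_le_two_mul_sqrt_integral_sq_mul_sqrt_integral_deriv_sq (hu.of_le one_le_two) hu0 hx
    _ ≤ _ := by
        gcongr
        exact integral_deriv_sq_le_sqrt_mul_sqrt hu (hx.1.trans hx.2) hu0 huL

/-- Gagliardo–Nirenberg inequality on a bounded interval (Lemma 2.2):
for `u ∈ H²₀(0,L)`, `‖u‖_∞ ≤ √2 ‖u''‖^{1/4} ‖u‖^{3/4}`. -/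
theorem gagliardo_nirenberg_interval (L : ℝ) (hL : 0 < L) (u : ℝ → ℝ)
    (hu : ContDiff ℝ 2 u)
    (hu0 : u 0 = 0) (huL : u L = 0)
    (hu'0 : deriv u 0 = 0) (hu'L : deriv u L = 0) :
    ∀ x ∈ Set.Icc (0:ℝ) L,
      |u x| ≤ Real.sqrt 2 *
        (Real.sqrt (∫ y in (0:ℝ)..L, (deriv (deriv u) y) ^ 2)) ^ ((1:ℝ)/4) *
        (Real.sqrt (∫ y in (0:ℝ)..L, (u y) ^ 2)) ^ ((3:ℝ)/4) :=
  gagliardo_nirenberg_interval_general L u hu hu0 huL
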